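/- ∫₀^∞ z · csch(πz/2) · log(cosh(πz/2)) dz = 4G/π, where G is Catalan's constant. -/

import Mathlib

/-!
Substituting t = πz/2 turns the integral into (4/π²) J with J = ∫₀^∞ t log(cosh t) / sinh t dt.
Since v ↦ (log cosh v - log cosh (t - v)) / sinh t is an antiderivative of sech (t - v) sech v,
  ∫₀ᵗ sech (t - v) sech v dv = 2 log(cosh t) / sinh t,
so 2J is the integral of t sech (t - v) sech v over the sector 0 < v < t. The shear t = v + u maps
the quadrant u, v > 0 onto that sector, and there the integrand becomes (u + v) sech u sech v, which
integrates to 2 · (π/2) · M with M = ∫₀^∞ x sech x dx. Finally the geometric expansion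
sech x = 2 ∑ (-1)ᵏ e^{-(2k+1)x} gives M = 2 ∑ (-1)ᵏ / (2k+1)² = 2G, hence J = πG.
-/

open MeasureTheory Set Filter Real Topology

theorem hasDerivAt_arctan_sinh (x : ℝ) :
    HasDerivAt (fun y => arctan (sinh y)) (cosh x)⁻¹ x := by
  refine ((hasDerivAt_arctan' (sinh x)).comp x (hasDerivAt_sinh x)).congr_deriv ?_
  rw [← cosh_sq', sq, mul_inv, inv_mul_cancel_right₀ (cosh_pos x).ne']

theorem tendsto_arctan_sinh_atTop :
    Tendsto (fun y => arctan (sinh y)) atTop (𝓝 (π / 2)) :=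
  (tendsto_arctan_atTop.mono_right nhdsWithin_le_nhds).comp <|
    tendsto_atTop_mono' _ (eventually_ge_atTop 0 |>.mono fun _ => self_le_sinh_iff.2) tendsto_id

theorem integrableOn_inv_cosh_Ioi : IntegrableOn (fun x => (cosh x)⁻¹) (Ioi 0) :=
  integrableOn_Ioi_deriv_of_nonneg (hasDerivAt_arctan_sinh 0).continuousAt.continuousWithinAt
    (fun x _ => hasDerivAt_arctan_sinh x) (fun x _ => by positivity) tendsto_arctan_sinh_atTop

theorem integral_inv_cosh_Ioi : ∫ x in Ioi 0, (cosh x)⁻¹ = π / 2 := by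
  rw [integral_Ioi_of_hasDerivAt_of_nonneg
    (hasDerivAt_arctan_sinh 0).continuousAt.continuousWithinAt
    (fun x _ => hasDerivAt_arctan_sinh x) (fun x _ => by positivity) tendsto_arctan_sinh_atTop]
  simp

theorem integral_mul_exp_neg_mul_Ioi {c : ℝ} (hc : 0 < c) :
    ∫ x in Ioi 0, x * exp (-(c * x)) = 1 / c ^ 2 := by
  have hGamma := integral_rpow_mul_exp_neg_mul_Ioi two_pos hc
  norm_num [Gamma_two] at hGamma
  simpa using hGamma

theorem integrableOn_mul_exp_neg_mul_Ioi {c : ℝ} (hc : 0 < c) :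
    IntegrableOn (fun x => x * exp (-(c * x))) (Ioi 0) := by
  simpa using integrableOn_rpow_mul_exp_neg_mul_rpow (s := 1) (p := 1) (by norm_num) one_pos hc

theorem hasSum_inv_cosh {x : ℝ} (hx : 0 < x) :
    HasSum (fun k : ℕ => 2 * (-1) ^ k * exp (-((2 * k + 1) * x))) (cosh x)⁻¹ := by
  have hq : ‖-exp (-(2 * x))‖ < 1 := by simpa using hx
  have hterm (k : ℕ) : 2 * (-1) ^ k * exp (-((2 * k + 1) * x))
      = 2 * exp (-x) * (-exp (-(2 * x))) ^ k := by
    rw [neg_pow (exp _), ← exp_nat_mul, show -((2 * k + 1) * x) = -x + k * -(2 * x) by ring,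
      exp_add]
    ring
  have hvalue : (cosh x)⁻¹ = 2 * exp (-x) * (1 - -exp (-(2 * x)))⁻¹ := by
    have hfactor : exp x + exp (-x) = exp x * (1 + exp (-(2 * x))) := by
      rw [mul_add, ← exp_add]; ring_nf
    rw [cosh_eq, sub_neg_eq_add, inv_div, hfactor, exp_neg x]
    field_simp
  rw [funext hterm, hvalue]
  exact (hasSum_geometric_of_norm_lt_one hq).mul_left _

theorem inv_cosh_le_two_mul_exp_neg (x : ℝ) : (cosh x)⁻¹ ≤ 2 * exp (-x) := by
  rw [cosh_eq, inv_div, exp_neg, ← div_eq_mul_inv]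
  gcongr
  exact le_add_of_nonneg_right (by positivity)

theorem integrableOn_mul_inv_cosh_Ioi : IntegrableOn (fun x => x * (cosh x)⁻¹) (Ioi 0) := by
  refine ((integrableOn_mul_exp_neg_mul_Ioi one_pos).const_mul 2).mono'
    (by fun_prop : Measurable fun x : ℝ => x * (cosh x)⁻¹).aestronglyMeasurable ?_
  refine (ae_restrict_iff' measurableSet_Ioi).2 (.of_forall fun x (hx : 0 < x) => ?_)
  rw [norm_of_nonneg (by positivity), one_mul, mul_left_comm]
  exact mul_le_mul_of_nonneg_left (inv_cosh_le_two_mul_exp_neg x) hx.le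

theorem summable_one_div_two_mul_add_one_sq :
    Summable fun k : ℕ => 1 / (2 * (k : ℝ) + 1) ^ 2 := by
  refine (((summable_one_div_nat_add_rpow (1 / 2) 2).2 one_lt_two).mul_left (1 / 4)).congr
    fun k => ?_
  rw [abs_of_pos (by positivity), rpow_two]
  field_simp
  ring

theorem integral_mul_inv_cosh_Ioi :
    ∫ x in Ioi 0, x * (cosh x)⁻¹ = 2 * ∑' k : ℕ, (-1 : ℝ) ^ k / (1 + 2 * (k : ℝ)) ^ 2 := by
  set F : ℕ → ℝ → ℝ := fun k x => 2 * (-1) ^ k * (x * exp (-((2 * k + 1) * x))) with hF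
  have hpos (k : ℕ) : (0 : ℝ) < 2 * k + 1 := by positivity
  have hint (k : ℕ) : IntegrableOn (F k) (Ioi 0) :=
    (integrableOn_mul_exp_neg_mul_Ioi (hpos k)).const_mul _
  have hintegral (k : ℕ) : ∫ x in Ioi 0, F k x = 2 * ((-1) ^ k / (1 + 2 * k) ^ 2) := by
    rw [integral_const_mul, integral_mul_exp_neg_mul_Ioi (hpos k)]
    ring
  have hnorm (k : ℕ) : ∫ x in Ioi 0, ‖F k x‖ = 2 * (1 / (2 * k + 1) ^ 2) := by
    rw [← integral_mul_exp_neg_mul_Ioi (hpos k), ← integral_const_mul]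
    refine setIntegral_congr_fun measurableSet_Ioi fun x (hx : 0 < x) => ?_
    simp only [hF, norm_mul, norm_pow, norm_neg, norm_one, one_pow, mul_one, norm_two]
    rw [norm_of_nonneg hx.le, norm_of_nonneg (exp_pos _).le]
  have hsum : ∀ x ∈ Ioi (0 : ℝ), ∑' k, F k x = x * (cosh x)⁻¹ := fun x hx => by
    simpa [hF, mul_comm, mul_left_comm, mul_assoc] using ((hasSum_inv_cosh hx).mul_left x).tsum_eq
  rw [← setIntegral_congr_fun measurableSet_Ioi hsum,
    ← integral_tsum_of_summable_integral_norm hint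
      (by simpa only [hnorm] using summable_one_div_two_mul_add_one_sq.mul_left 2),
    funext hintegral, tsum_mul_left]

theorem hasDerivAt_log_cosh_sub_log_cosh_sub (t v : ℝ) :
    HasDerivAt (fun v => log (cosh v) - log (cosh (t - v)))
      (sinh t * ((cosh (t - v))⁻¹ * (cosh v)⁻¹)) v := by
  have hsub : HasDerivAt (fun v => cosh (t - v)) (sinh (t - v) * -1) v :=
    (hasDerivAt_cosh (t - v)).comp v ((hasDerivAt_id v).const_sub t)
  refine (((hasDerivAt_cosh v).log (cosh_pos v).ne').sub
    (hsub.log (cosh_pos (t - v)).ne')).congr_deriv ?_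
  have hc₁ := (cosh_pos v).ne'
  have hc₂ := (cosh_pos (t - v)).ne'
  rw [show sinh t = sinh (v + (t - v)) by ring_nf, sinh_add]
  field_simp
  ring

theorem sinh_mul_integral_inv_cosh_sub_mul_inv_cosh (t : ℝ) :
    sinh t * ∫ v in 0..t, (cosh (t - v))⁻¹ * (cosh v)⁻¹ = 2 * log (cosh t) := by
  rw [← intervalIntegral.integral_const_mul, intervalIntegral.integral_eq_sub_of_hasDerivAt
    (fun v _ => hasDerivAt_log_cosh_sub_log_cosh_sub t v)
    (Continuous.intervalIntegrable (by fun_prop (disch := exact fun _ => (cosh_pos _).ne')) _ _)]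
  simp only [sub_self, sub_zero, cosh_zero, log_one]
  ring

theorem integral_Ioi_integral_Ioo_eq_integral_prod {E : Type*} [NormedAddCommGroup E]
    [NormedSpace ℝ E] {f : ℝ × ℝ → E}
    (hf : Integrable (fun p => f (p.1, p.1 + p.2))
      ((volume.restrict (Ioi 0)).prod (volume.restrict (Ioi 0)))) :
    ∫ t in Ioi 0, ∫ v in Ioo 0 t, f (v, t) =
      ∫ p, f (p.1, p.1 + p.2) ∂(volume.restrict (Ioi 0)).prod (volume.restrict (Ioi 0)) := by
  set S : Set (ℝ × ℝ) := {p | 0 < p.1 ∧ p.1 < p.2}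
  have hS : MeasurableSet S :=
    (measurableSet_lt measurable_const measurable_fst).inter
      (measurableSet_lt measurable_fst measurable_snd)
  have hshear : MeasurePreserving (Homeomorph.shearAddRight ℝ) (volume.prod volume)
      (volume.prod volume) :=
    measurePreserving_prod_add _ _
  have hemb := (Homeomorph.shearAddRight ℝ).measurableEmbedding
  have hpre : (Homeomorph.shearAddRight ℝ) ⁻¹' S = Ioi 0 ×ˢ Ioi 0 := by
    ext p
    simp [S]
  rw [Measure.prod_restrict, ← hpre] at hf ⊢
  have hfS : IntegrableOn f S (volume.prod volume) :=
    (hshear.integrableOn_comp_preimage hemb).1 hf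
  have hslice (t : ℝ) : ∫ v, S.indicator f (v, t) = ∫ v in Ioo 0 t, f (v, t) := by
    rw [← integral_indicator measurableSet_Ioo]
    rfl
  refine Eq.trans ?_ (hshear.setIntegral_preimage_emb hemb f S).symm
  rw [← integral_indicator hS,
    integral_prod_symm _ ((integrable_indicator_iff hS).2 hfS)]
  simp only [hslice]
  refine setIntegral_eq_integral_of_forall_compl_eq_zero fun t (ht : ¬ 0 < t) => ?_
  rw [Ioo_eq_empty ht, Measure.restrict_empty, integral_zero_measure]

theorem integral_mul_inv_sinh_mul_log_cosh_Ioi :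
    ∫ t in Ioi 0, t * (sinh t)⁻¹ * log (cosh t) = π / 2 * ∫ x in Ioi 0, x * (cosh x)⁻¹ := by
  set μ := volume.restrict (Ioi (0 : ℝ))
  set k : ℝ × ℝ → ℝ := fun p => p.2 * ((cosh (p.2 - p.1))⁻¹ * (cosh p.1)⁻¹)
  have hsheared : (fun p : ℝ × ℝ => k (p.1, p.1 + p.2)) =
      fun p => p.1 * (cosh p.1)⁻¹ * (cosh p.2)⁻¹ + (cosh p.1)⁻¹ * (p.2 * (cosh p.2)⁻¹) := by
    ext p
    simp only [k, add_sub_cancel_left]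
    ring
  have hint₁ : Integrable (fun p : ℝ × ℝ => p.1 * (cosh p.1)⁻¹ * (cosh p.2)⁻¹) (μ.prod μ) :=
    integrableOn_mul_inv_cosh_Ioi.mul_prod integrableOn_inv_cosh_Ioi
  have hint₂ : Integrable (fun p : ℝ × ℝ => (cosh p.1)⁻¹ * (p.2 * (cosh p.2)⁻¹)) (μ.prod μ) :=
    integrableOn_inv_cosh_Ioi.mul_prod integrableOn_mul_inv_cosh_Ioi
  have hslice : ∀ t ∈ Ioi (0 : ℝ),
      t * (sinh t)⁻¹ * log (cosh t) = (∫ v in Ioo 0 t, k (v, t)) / 2 := fun t (ht : 0 < t) => by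
    simp only [k]
    rw [← integral_Ioc_eq_integral_Ioo, ← intervalIntegral.integral_of_le ht.le,
      intervalIntegral.integral_const_mul, ← mul_div_mul_left _ _ (sinh_pos_iff.2 ht).ne',
      mul_left_comm (sinh t), sinh_mul_integral_inv_cosh_sub_mul_inv_cosh]
    field_simp
  rw [setIntegral_congr_fun measurableSet_Ioi hslice, integral_div,
    integral_Ioi_integral_Ioo_eq_integral_prod (hsheared ▸ hint₁.add hint₂), hsheared,
    integral_add hint₁ hint₂,
    integral_prod_mul (fun x => x * (cosh x)⁻¹) (fun x => (cosh x)⁻¹),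
    integral_prod_mul (fun x => (cosh x)⁻¹) (fun x => x * (cosh x)⁻¹), integral_inv_cosh_Ioi]
  ring

theorem convolution_first_moment :
    ∫ z in Set.Ioi (0:ℝ),
        z * (2 / (Real.exp (Real.pi * z / 2) - Real.exp (-(Real.pi * z / 2)))) *
          Real.log ((Real.exp (Real.pi * z / 2) + Real.exp (-(Real.pi * z / 2))) / 2)
      = 4 * (∑' k : ℕ, (-1 : ℝ) ^ k / (1 + 2 * (k : ℝ)) ^ 2) / Real.pi := by
  have hcsch (a : ℝ) : 2 / (exp a - exp (-a)) = (sinh a)⁻¹ := by rw [sinh_eq, inv_div]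
  have hrescale (z : ℝ) : z * (sinh (π * z / 2))⁻¹ * log (cosh (π * z / 2)) =
      2 / π * (π / 2 * z * (sinh (π / 2 * z))⁻¹ * log (cosh (π / 2 * z))) := by
    rw [mul_div_right_comm]
    field_simp
  simp only [hcsch, ← cosh_eq, hrescale]
  rw [integral_const_mul, integral_comp_mul_left_Ioi (fun t => t * (sinh t)⁻¹ * log (cosh t)) 0
    (by positivity), mul_zero, smul_eq_mul, integral_mul_inv_sinh_mul_log_cosh_Ioi,
    integral_mul_inv_cosh_Ioi]
  field_simp
  ring
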